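/- arXiv:1205.3957 — 5 statements merged into one kernel-verified Lean document; each statement's English description precedes it below -/
import Mathlib

section
/- Let λ, ν > −1. Then there exist constants 0 < c ≤ C < ∞, depending only on λ and ν, such that for every interval I = (a,b) with 0 ≤ a < b ≤ π: c · (b−a) · b^{λ} · (π−a)^{ν} ≤ ∫_a^b θ^{λ} (π−θ)^{ν} dθ ≤ C · (b−a) · b^{λ} · (π−a)^{ν}. -/
/-!
Split `(a, b)` at its midpoint `m`. On `(a, m)` the factor `π - θ` stays within a factor two of
`π - a`, and on `(m, b)` the factor `θ` stays within a factor two of `b`; so each half reduces to a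
one-variable integral `∫ x^λ` over an interval `(s, t)` with `0 ≤ s`, which is at most a constant
times `(t - s) t^λ`: either `s ≥ t/2` and `x^λ` is comparable to `t^λ`, or `t ≤ 2 (t - s)` and the
integral is at most `∫₀ᵗ x^λ = t^{λ+1}/(λ+1)`. The second half is the first one after `θ ↦ π - θ`.
For the lower bound, on the middle half `[(3a+b)/4, (a+3b)/4]` both factors are comparable to
`b^λ (π-a)^ν` at once.
-/

open Real MeasureTheory intervalIntegral Set

lemma abs_mul_log_sub_mul_log_le {r u K x : ℝ} (hu : 0 < u) (hK : 1 ≤ K)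
    (hx : x ∈ Icc (u / K) u) : |r * log x - r * log u| ≤ |r| * log K := by
  have hK0 : 0 < K := one_pos.trans_le hK
  have hx0 : 0 < x := (div_pos hu hK0).trans_le hx.1
  have hlog_le : log x ≤ log u := log_le_log hx0 hx.2
  have hle_log : log u - log K ≤ log x := by
    rw [← log_div hu.ne' hK0.ne']
    exact log_le_log (div_pos hu hK0) hx.1
  rw [← mul_sub, abs_mul]
  gcongr
  rw [abs_le]
  constructor <;> linarith

lemma rpow_le_rpow_abs_mul_rpow_of_mem_Icc {r u K x : ℝ} (hu : 0 < u) (hK : 1 ≤ K)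
    (hx : x ∈ Icc (u / K) u) : x ^ r ≤ K ^ |r| * u ^ r := by
  have hx0 : 0 < x := (div_pos hu (one_pos.trans_le hK)).trans_le hx.1
  have h := abs_le.1 (abs_mul_log_sub_mul_log_le (r := r) hu hK hx)
  rw [rpow_def_of_pos hx0, rpow_def_of_pos (one_pos.trans_le hK), rpow_def_of_pos hu, ← exp_add]
  exact exp_le_exp.2 (by linarith [h.2])

lemma rpow_neg_abs_mul_rpow_le_rpow_of_mem_Icc {r u K x : ℝ} (hu : 0 < u) (hK : 1 ≤ K)
    (hx : x ∈ Icc (u / K) u) : K ^ (-|r|) * u ^ r ≤ x ^ r := by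
  have hx0 : 0 < x := (div_pos hu (one_pos.trans_le hK)).trans_le hx.1
  have h := abs_le.1 (abs_mul_log_sub_mul_log_le (r := r) hu hK hx)
  rw [rpow_def_of_pos hx0, rpow_def_of_pos (one_pos.trans_le hK), rpow_def_of_pos hu, ← exp_add]
  exact exp_le_exp.2 (by linarith [h.1])

lemma exists_integral_rpow_le {lam : ℝ} (hlam : -1 < lam) :
    ∃ C, 0 ≤ C ∧ ∀ a b : ℝ, 0 ≤ a → a < b → ∫ x in a..b, x ^ lam ≤ C * (b - a) * b ^ lam := by
  refine ⟨max (2 ^ |lam|) (2 / (lam + 1)), by positivity, fun a b ha hab => ?_⟩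
  have hb : 0 < b := ha.trans_lt hab
  rcases le_or_gt (b / 2) a with hba | hba
  · calc ∫ x in a..b, x ^ lam ≤ ∫ _ in a..b, 2 ^ |lam| * b ^ lam :=
          integral_mono_on hab.le (intervalIntegrable_rpow' hlam) intervalIntegrable_const
            fun x hx => rpow_le_rpow_abs_mul_rpow_of_mem_Icc hb one_le_two
              ⟨hba.trans hx.1, hx.2⟩
      _ = 2 ^ |lam| * (b - a) * b ^ lam := by
          rw [intervalIntegral.integral_const, smul_eq_mul]; ring
      _ ≤ _ := by
          gcongr
          exact le_max_left _ _
  · have hint : ∫ x in (0 : ℝ)..b, x ^ lam = b * b ^ lam / (lam + 1) := by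
      rw [integral_rpow (Or.inl hlam), zero_rpow (by linarith), rpow_add_one hb.ne']
      ring
    calc ∫ x in a..b, x ^ lam ≤ ∫ x in (0 : ℝ)..b, x ^ lam :=
          integral_mono_interval ha hab.le le_rfl
            (by filter_upwards [ae_restrict_mem measurableSet_Ioc] with x hx
                  using rpow_nonneg hx.1.le lam)
            (intervalIntegrable_rpow' hlam)
      _ ≤ 2 / (lam + 1) * (b - a) * b ^ lam := by
          rw [hint, div_mul_eq_mul_div, div_mul_eq_mul_div]
          gcongr <;> linarith
      _ ≤ _ := by
          gcongr
          exact le_max_right _ _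

section Weight

variable {lam nu L : ℝ}

lemma intervalIntegrable_rpow_mul_rpow_sub_of_lt (hlam : -1 < lam) {a b : ℝ} (hab : a ≤ b)
    (hbL : b < L) : IntervalIntegrable (fun θ => θ ^ lam * (L - θ) ^ nu) volume a b := by
  refine (intervalIntegrable_rpow' hlam).mul_continuousOn
    (ContinuousOn.rpow_const (by fun_prop) fun θ hθ => Or.inl ?_)
  rw [uIcc_of_le hab] at hθ
  exact (sub_pos.2 (hθ.2.trans_lt hbL)).ne'

lemma intervalIntegrable_rpow_mul_rpow_sub_of_pos (hnu : -1 < nu) {a b : ℝ} (ha : 0 < a)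
    (hab : a ≤ b) : IntervalIntegrable (fun θ => θ ^ lam * (L - θ) ^ nu) volume a b := by
  have hsub : IntervalIntegrable (fun θ => (L - θ) ^ nu) volume a b := by
    simpa using (intervalIntegrable_rpow' hnu (a := L - a) (b := L - b)).comp_sub_left L
  refine hsub.continuousOn_mul (ContinuousOn.rpow_const continuousOn_id fun θ hθ => Or.inl ?_)
  rw [uIcc_of_le hab] at hθ
  exact (ha.trans_le hθ.1).ne'

lemma intervalIntegrable_rpow_mul_rpow_sub (hlam : -1 < lam) (hnu : -1 < nu) {a b : ℝ}
    (ha : 0 ≤ a) (hab : a < b) (hbL : b ≤ L) :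
    IntervalIntegrable (fun θ => θ ^ lam * (L - θ) ^ nu) volume a b :=
  (intervalIntegrable_rpow_mul_rpow_sub_of_lt hlam (a := a) (b := (a + b) / 2) (by linarith)
    (by linarith)).trans
    (intervalIntegrable_rpow_mul_rpow_sub_of_pos hnu (by linarith) (by linarith))

lemma exists_le_integral_rpow_mul_rpow_sub (hlam : -1 < lam) (hnu : -1 < nu) :
    ∃ c, 0 < c ∧ ∀ a b : ℝ, 0 ≤ a → a < b → b ≤ L →
      c * (b - a) * b ^ lam * (L - a) ^ nu ≤ ∫ θ in a..b, θ ^ lam * (L - θ) ^ nu := by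
  refine ⟨4 ^ (-|lam|) * 4 ^ (-|nu|) / 2, by positivity, fun a b ha hab hbL => ?_⟩
  obtain ⟨p, hp⟩ : ∃ p, 4 * p = 3 * a + b := ⟨(3 * a + b) / 4, by ring⟩
  obtain ⟨q, hq⟩ : ∃ q, 4 * q = a + 3 * b := ⟨(a + 3 * b) / 4, by ring⟩
  set w := 4 ^ (-|lam|) * b ^ lam * (4 ^ (-|nu|) * (L - a) ^ nu)
  have hw : ∀ θ ∈ Icc p q, w ≤ θ ^ lam * (L - θ) ^ nu := fun θ hθ =>
    mul_le_mul
      (rpow_neg_abs_mul_rpow_le_rpow_of_mem_Icc (by linarith) (by norm_num)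
        ⟨by linarith [hθ.1], by linarith [hθ.2]⟩)
      (rpow_neg_abs_mul_rpow_le_rpow_of_mem_Icc (by linarith) (by norm_num)
        ⟨by linarith [hθ.2], by linarith [hθ.1]⟩)
      (mul_nonneg (by positivity) (rpow_nonneg (by linarith) nu))
      (rpow_nonneg (by linarith [hθ.1]) lam)
  calc 4 ^ (-|lam|) * 4 ^ (-|nu|) / 2 * (b - a) * b ^ lam * (L - a) ^ nu
      = ∫ _ in p..q, w := by
        rw [intervalIntegral.integral_const, smul_eq_mul, show q - p = (b - a) / 2 by linarith]
        ring
    _ ≤ ∫ θ in p..q, θ ^ lam * (L - θ) ^ nu :=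
        integral_mono_on (by linarith) intervalIntegrable_const
          (intervalIntegrable_rpow_mul_rpow_sub_of_lt hlam (by linarith) (by linarith)) hw
    _ ≤ ∫ θ in a..b, θ ^ lam * (L - θ) ^ nu :=
        integral_mono_interval (by linarith) (by linarith) (by linarith)
          (by filter_upwards [ae_restrict_mem measurableSet_Ioc] with θ hθ
                using mul_nonneg (rpow_nonneg (ha.trans hθ.1.le) lam)
                  (rpow_nonneg (by linarith [hθ.2]) nu))
          (intervalIntegrable_rpow_mul_rpow_sub hlam hnu ha hab hbL)

lemma exists_integral_rpow_mul_rpow_sub_le_of_two_mul_sub_le (hlam : -1 < lam) :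
    ∃ C, 0 ≤ C ∧ ∀ a c : ℝ, 0 ≤ a → a < c → 2 * (c - a) ≤ L - a →
      ∫ θ in a..c, θ ^ lam * (L - θ) ^ nu ≤ C * (c - a) * c ^ lam * (L - a) ^ nu := by
  obtain ⟨C, hC, hint⟩ := exists_integral_rpow_le hlam
  refine ⟨2 ^ |nu| * C, by positivity, fun a c ha hac hcL => ?_⟩
  have hLa : 0 < L - a := by linarith
  calc ∫ θ in a..c, θ ^ lam * (L - θ) ^ nu ≤ ∫ θ in a..c, θ ^ lam * (2 ^ |nu| * (L - a) ^ nu) :=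
        integral_mono_on hac.le
          (intervalIntegrable_rpow_mul_rpow_sub_of_lt hlam hac.le (by linarith))
          ((intervalIntegrable_rpow' hlam).mul_const _) fun θ hθ =>
            mul_le_mul_of_nonneg_left
              (rpow_le_rpow_abs_mul_rpow_of_mem_Icc hLa one_le_two
                ⟨by linarith [hθ.2], by linarith [hθ.1]⟩)
              (rpow_nonneg (ha.trans hθ.1) lam)
    _ = (∫ θ in a..c, θ ^ lam) * (2 ^ |nu| * (L - a) ^ nu) := integral_mul_const _ _
    _ ≤ C * (c - a) * c ^ lam * (2 ^ |nu| * (L - a) ^ nu) := by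
        gcongr
        exact hint a c ha hac
    _ = 2 ^ |nu| * C * (c - a) * c ^ lam * (L - a) ^ nu := by ring

lemma exists_integral_rpow_mul_rpow_sub_le (hlam : -1 < lam) (hnu : -1 < nu) :
    ∃ C, ∀ a b : ℝ, 0 ≤ a → a < b → b ≤ L →
      ∫ θ in a..b, θ ^ lam * (L - θ) ^ nu ≤ C * (b - a) * b ^ lam * (L - a) ^ nu := by
  obtain ⟨Cl, hCl, hleft⟩ :=
    exists_integral_rpow_mul_rpow_sub_le_of_two_mul_sub_le (L := L) (nu := nu) hlam
  obtain ⟨Cr, hCr, hright⟩ :=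
    exists_integral_rpow_mul_rpow_sub_le_of_two_mul_sub_le (L := L) (nu := lam) hnu
  refine ⟨(2 ^ |lam| * Cl + 2 ^ |nu| * Cr) / 2, fun a b ha hab hbL => ?_⟩
  obtain ⟨m, hm⟩ : ∃ m, 2 * m = a + b := ⟨(a + b) / 2, by ring⟩
  have hb : 0 < b := ha.trans_lt hab
  have hLa : 0 < L - a := by linarith
  have hmb : m ^ lam ≤ 2 ^ |lam| * b ^ lam :=
    rpow_le_rpow_abs_mul_rpow_of_mem_Icc hb one_le_two ⟨by linarith, by linarith⟩
  have hLm : (L - m) ^ nu ≤ 2 ^ |nu| * (L - a) ^ nu :=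
    rpow_le_rpow_abs_mul_rpow_of_mem_Icc hLa one_le_two ⟨by linarith, by linarith⟩
  have hreflect : ∫ θ in m..b, θ ^ lam * (L - θ) ^ nu
      = ∫ s in (L - b)..(L - m), s ^ nu * (L - s) ^ lam := by
    simpa [mul_comm] using integral_comp_sub_left (fun s => s ^ nu * (L - s) ^ lam) L (a := m)
  calc ∫ θ in a..b, θ ^ lam * (L - θ) ^ nu
      = (∫ θ in a..m, θ ^ lam * (L - θ) ^ nu) + ∫ θ in m..b, θ ^ lam * (L - θ) ^ nu :=
        (integral_add_adjacent_intervals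
          (intervalIntegrable_rpow_mul_rpow_sub_of_lt hlam (by linarith) (by linarith))
          (intervalIntegrable_rpow_mul_rpow_sub_of_pos hnu (by linarith) (by linarith))).symm
    _ ≤ Cl * (m - a) * m ^ lam * (L - a) ^ nu
          + Cr * ((L - m) - (L - b)) * (L - m) ^ nu * (L - (L - b)) ^ lam := by
        rw [hreflect]
        gcongr
        · exact hleft a m ha (by linarith) (by linarith)
        · exact hright (L - b) (L - m) (by linarith) (by linarith) (by linarith)
    _ ≤ Cl * (m - a) * (2 ^ |lam| * b ^ lam) * (L - a) ^ nu
          + Cr * ((L - m) - (L - b)) * (2 ^ |nu| * (L - a) ^ nu) * b ^ lam := by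
        rw [sub_sub_cancel]
        gcongr
        · exact mul_nonneg hCl (by linarith)
        · exact mul_nonneg hCr (by linarith)
    _ = (2 ^ |lam| * Cl + 2 ^ |nu| * Cr) / 2 * (b - a) * b ^ lam * (L - a) ^ nu := by
        rw [show m - a = (b - a) / 2 by linarith, show L - m - (L - b) = (b - a) / 2 by linarith]
        ring

end Weight

/-- For `λ, ν > -1` there are constants `0 < c ≤ C < ∞`, depending only on `λ` and `ν`,
such that for every interval `(a,b)` with `0 ≤ a < b ≤ π`,
`c (b-a) b^λ (π-a)^ν ≤ ∫_a^b θ^λ (π-θ)^ν dθ ≤ C (b-a) b^λ (π-a)^ν`. -/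
theorem integral_rpow_mul_rpow_comparable (lam nu : ℝ) (hlam : -1 < lam) (hnu : -1 < nu) :
    ∃ c C : ℝ, 0 < c ∧ c ≤ C ∧ ∀ a b : ℝ, 0 ≤ a → a < b → b ≤ π →
      c * (b - a) * b ^ lam * (π - a) ^ nu ≤ (∫ θ in a..b, θ ^ lam * (π - θ) ^ nu) ∧
      (∫ θ in a..b, θ ^ lam * (π - θ) ^ nu) ≤ C * (b - a) * b ^ lam * (π - a) ^ nu := by
  obtain ⟨c, hc, hlower⟩ := exists_le_integral_rpow_mul_rpow_sub (L := π) hlam hnu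
  obtain ⟨C, hupper⟩ := exists_integral_rpow_mul_rpow_sub_le (L := π) hlam hnu
  refine ⟨c, max c C, hc, le_max_left c C, fun a b ha hab hbπ => ⟨hlower a b ha hab hbπ, ?_⟩⟩
  have hb : 0 < b := ha.trans_lt hab
  calc ∫ θ in a..b, θ ^ lam * (π - θ) ^ nu ≤ C * (b - a) * b ^ lam * (π - a) ^ nu :=
        hupper a b ha hab hbπ
    _ ≤ max c C * (b - a) * b ^ lam * (π - a) ^ nu := by
        have hπa : 0 < π - a := by linarith
        gcongr
        exact le_max_right c C
end

section
/- Let (X, m) be a σ-finite measure space and 0 < p ≤ q < ∞. Let T be a linear operator from L^p(X, m) to L^q(X, m) such that ‖Tf‖_{L^q} ≤ M ‖f‖_{L^p} for all f ∈ L^p(X, m). Then for every sequence (f_j)_{j≥0} in L^p(X, m): ‖ (Σ_j |T f_j|² )^{1/2} ‖_{L^q} ≤ M ‖ (Σ_j |f_j|² )^{1/2} ‖_{L^p}. -/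
/-!
If `ω` is a standard Gaussian vector in `ℝⁿ`, then `𝔼 |⟪a, ω⟫| ^ r = c_r ‖a‖ ^ r` with a constant
`0 < c_r < ∞`. For finitely many `fᵢ`, apply this with `a = (T fᵢ y)ᵢ`, integrate in `y`, exchange
the integrals, and bound the inner integral by the hypothesis on `T` applied to the single function
`∑ ωᵢ fᵢ`. What remains is `𝔼 (∫ |∑ ωᵢ fᵢ|^p)^(q/p)`, which Minkowski's integral inequality with
exponent `q / p ≥ 1` bounds by `(∫ (𝔼 |∑ ωᵢ fᵢ|^q)^(p/q))^(q/p) = c_q (∫ ‖(fᵢ)ᵢ‖^p)^(q/p)`.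
Cancelling `c_q` gives the bound for finite families, and monotone convergence the general case.
-/

open MeasureTheory ProbabilityTheory
open scoped ENNReal RealInnerProductSpace

namespace ENNReal

lemma rpow_le_of_le_rpow_one_sub_mul {A B : ℝ≥0∞} {s : ℝ} (hs₀ : 0 < s) (hs₁ : s ≤ 1)
    (hA : A ≠ ∞) (h : A ≤ A ^ (1 - s) * B) : A ^ s ≤ B := by
  rcases eq_or_ne A 0 with rfl | hA₀
  · simp [zero_rpow_of_pos hs₀]
  have hsplit : A ^ (1 - s) * A ^ s = A := by
    rw [← rpow_add_of_nonneg _ _ (sub_nonneg.mpr hs₁) hs₀.le, sub_add_cancel, rpow_one]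
  refine (ENNReal.mul_le_mul_iff_right (a := A ^ (1 - s)) ?_ ?_).mp (hsplit.symm ▸ h)
  · simp [rpow_eq_zero_iff, hA₀, hA]
  · exact rpow_ne_top_of_nonneg (sub_nonneg.mpr hs₁) hA

lemma rpow_one_div_le_mul_rpow_one_div_iff {A B C : ℝ≥0∞} {p q : ℝ} (hq : 0 < q) :
    A ^ (1 / q) ≤ C * B ^ (1 / p) ↔ A ≤ C ^ q * B ^ (q / p) := by
  rw [one_div q, rpow_inv_le_iff hq, mul_rpow_of_nonneg _ _ hq.le, ← rpow_mul,
    one_div_mul_eq_div]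

lemma iSup_inf_natCast (a : ℝ≥0∞) : ⨆ k : ℕ, a ⊓ k = a := by
  rw [← inf_iSup_eq, iSup_natCast, inf_top_eq]

variable {Ω X : Type*} [MeasurableSpace Ω] [MeasurableSpace X] {ν : Measure Ω} {μ : Measure X}
  [SFinite μ] {g : X → Ω → ℝ≥0∞}

lemma lintegral_rpow_mul_lintegral_le [SFinite ν] (hg : Measurable (Function.uncurry g))
    {h : Ω → ℝ≥0∞} (hh : Measurable h) {r : ℝ} (hr : 1 < r) :
    ∫⁻ ω, h ω ^ (r - 1) * ∫⁻ x, g x ω ∂μ ∂ν ≤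
      (∫⁻ ω, h ω ^ r ∂ν) ^ (1 - 1 / r) * ∫⁻ x, (∫⁻ ω, g x ω ^ r ∂ν) ^ (1 / r) ∂μ := by
  have hconj : r.HolderConjugate (r / (r - 1)) := Real.HolderConjugate.conjExponent hr
  have hpow (ω : Ω) : (h ω ^ (r - 1)) ^ (r / (r - 1)) = h ω ^ r := by
    rw [← rpow_mul, mul_div_cancel₀ _ (sub_pos.mpr hr).ne']
  have hexp : 1 / (r / (r - 1)) = 1 - 1 / r := by
    field_simp
  have holder (x : X) : ∫⁻ ω, g x ω * h ω ^ (r - 1) ∂ν ≤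
      (∫⁻ ω, g x ω ^ r ∂ν) ^ (1 / r) * (∫⁻ ω, h ω ^ r ∂ν) ^ (1 - 1 / r) := by
    simpa only [Pi.mul_apply, hpow, hexp] using lintegral_mul_le_Lp_mul_Lq ν hconj (f := g x)
      (hg.comp measurable_prodMk_left).aemeasurable (hh.pow_const (r - 1)).aemeasurable
  have hB : Measurable fun x => (∫⁻ ω, g x ω ^ r ∂ν) ^ (1 / r) :=
    ((hg.pow_const r).lintegral_prod_right' (f := fun z => g z.1 z.2 ^ r)).pow_const _
  calc ∫⁻ ω, h ω ^ (r - 1) * ∫⁻ x, g x ω ∂μ ∂ν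
      = ∫⁻ ω, ∫⁻ x, g x ω * h ω ^ (r - 1) ∂μ ∂ν := by
        refine lintegral_congr fun ω => ?_
        have hgω : Measurable fun x => g x ω := hg.comp measurable_prodMk_right
        rw [mul_comm, ← lintegral_mul_const _ hgω]
    _ = ∫⁻ x, ∫⁻ ω, g x ω * h ω ^ (r - 1) ∂ν ∂μ :=
        lintegral_lintegral_swap ((hg.comp measurable_swap).mul
          ((hh.pow_const _).comp measurable_fst)).aemeasurable
    _ ≤ ∫⁻ x, (∫⁻ ω, g x ω ^ r ∂ν) ^ (1 / r) * (∫⁻ ω, h ω ^ r ∂ν) ^ (1 - 1 / r) ∂μ :=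
        lintegral_mono holder
    _ = _ := by rw [lintegral_mul_const _ hB, mul_comm]

theorem lintegral_Lp_lintegral_le [IsFiniteMeasure ν] (hg : Measurable (Function.uncurry g))
    {r : ℝ} (hr : 1 ≤ r) :
    (∫⁻ ω, (∫⁻ x, g x ω ∂μ) ^ r ∂ν) ^ (1 / r) ≤ ∫⁻ x, (∫⁻ ω, g x ω ^ r ∂ν) ^ (1 / r) ∂μ := by
  rcases hr.eq_or_lt with rfl | hr
  · simpa using (lintegral_lintegral_swap (f := fun ω x => g x ω)
      (hg.comp measurable_swap).aemeasurable).le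
  have hr₀ : 0 < r := zero_lt_one.trans hr
  set B := ∫⁻ x, (∫⁻ ω, g x ω ^ r ∂ν) ^ (1 / r) ∂μ
  set H : Ω → ℝ≥0∞ := fun ω => ∫⁻ x, g x ω ∂μ
  have hH : Measurable H := hg.lintegral_prod_left
  -- Truncation makes `∫ H ^ r` finite, so that it can be divided out of Hölder's inequality.
  have truncated (k : ℕ) : ∫⁻ ω, (H ω ⊓ k) ^ r ∂ν ≤ B ^ r := by
    have hfin : ∫⁻ ω, (H ω ⊓ k) ^ r ∂ν ≠ ∞ := by
      refine ne_top_of_le_ne_top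
        (lintegral_const_lt_top (rpow_ne_top_of_nonneg hr₀.le (natCast_ne_top k))).ne
        (lintegral_mono fun ω => ?_)
      exact rpow_le_rpow inf_le_right hr₀.le
    rw [← rpow_inv_le_iff hr₀, inv_eq_one_div]
    refine rpow_le_of_le_rpow_one_sub_mul (by positivity) ((div_le_one hr₀).mpr hr.le) hfin ?_
    calc ∫⁻ ω, (H ω ⊓ k) ^ r ∂ν ≤ ∫⁻ ω, (H ω ⊓ k) ^ (r - 1) * H ω ∂ν := by
          refine lintegral_mono fun ω => ?_
          calc (H ω ⊓ k) ^ r = (H ω ⊓ k) ^ (r - 1) * (H ω ⊓ k) ^ (1 : ℝ) := by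
                rw [← rpow_add_of_nonneg _ _ (by linarith) zero_le_one, sub_add_cancel]
            _ ≤ _ := by rw [rpow_one]; gcongr; exact inf_le_left
      _ ≤ _ := lintegral_rpow_mul_lintegral_le hg (hH.inf measurable_const) hr
  have hmono : Monotone fun (k : ℕ) ω => (H ω ⊓ k) ^ r := fun i j hij ω =>
    rpow_le_rpow (inf_le_inf_left _ (Nat.cast_le.mpr hij)) hr₀.le
  have hsup : ∫⁻ ω, H ω ^ r ∂ν = ⨆ k : ℕ, ∫⁻ ω, (H ω ⊓ k) ^ r ∂ν := by
    rw [← lintegral_iSup (f := fun (k : ℕ) ω => (H ω ⊓ k) ^ r)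
      (fun k => (hH.inf measurable_const).pow_const r) hmono]
    congr with ω
    have := (orderIsoRpow r hr₀).map_iSup fun k : ℕ => H ω ⊓ k
    simpa only [orderIsoRpow_apply, iSup_inf_natCast] using this
  rw [← inv_eq_one_div, rpow_inv_le_iff hr₀, hsup]
  exact iSup_le truncated

end ENNReal

lemma lintegral_tsum_rpow_eq_iSup {X : Type*} [MeasurableSpace X] {μ : Measure X}
    {u : ℕ → X → ℝ≥0∞} (hu : ∀ j, Measurable (u j)) {s : ℝ} (hs : 0 < s) :
    ∫⁻ x, (∑' j, u j x) ^ s ∂μ = ⨆ n, ∫⁻ x, (∑ j ∈ Finset.range n, u j x) ^ s ∂μ := by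
  rw [← lintegral_iSup (fun n => (Finset.measurable_sum _ fun j _ => hu j).pow_const s)]
  · congr with x
    rw [ENNReal.tsum_eq_iSup_nat]
    exact (ENNReal.orderIsoRpow s hs).map_iSup _
  · exact fun m n hmn x => ENNReal.rpow_le_rpow
      (Finset.sum_le_sum_of_subset (Finset.range_subset_range.mpr hmn)) hs.le

namespace ProbabilityTheory

noncomputable def gaussianAbsMoment (r : ℝ) : ℝ≥0∞ := ∫⁻ t, ‖t‖ₑ ^ r ∂gaussianReal 0 1

lemma gaussianAbsMoment_ne_top {r : ℝ} (hr : 0 < r) : gaussianAbsMoment r ≠ ∞ := by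
  have h := (memLp_id_gaussianReal (μ := 0) (v := 1) r.toNNReal).eLpNorm_lt_top
  simpa [gaussianAbsMoment, hr.le] using
    (lintegral_rpow_enorm_lt_top_of_eLpNorm_lt_top (by simpa using hr) (by simp) h).ne

lemma gaussianAbsMoment_ne_zero (r : ℝ) : gaussianAbsMoment r ≠ 0 := by
  have := nullSingletonClass_gaussianReal (μ := 0) one_ne_zero
  rw [gaussianAbsMoment, Ne, lintegral_eq_zero_iff (by fun_prop)]
  intro h
  have h0 : ∀ᵐ t ∂gaussianReal 0 1, t = 0 := h.mono fun t ht => by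
    simp only [Pi.zero_apply, ENNReal.rpow_eq_zero_iff, enorm_eq_zero, enorm_ne_top] at ht
    tauto
  have h1 : ∀ᵐ t ∂gaussianReal 0 1, t ≠ 0 := compl_mem_ae_iff.mpr (measure_singleton 0)
  obtain ⟨t, ht0, ht1⟩ := (h0.and h1).exists
  exact ht1 ht0

variable {E : Type*} [NormedAddCommGroup E] [InnerProductSpace ℝ E] [FiniteDimensional ℝ E]
  [MeasurableSpace E] [BorelSpace E]

lemma stdGaussian_map_inner (a : E) :
    (stdGaussian E).map (⟪a, ·⟫) = (gaussianReal 0 1).map (‖a‖ * ·) := by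
  have h := IsGaussian.map_eq_gaussianReal (μ := stdGaussian E) (innerSL ℝ a)
  rw [integral_strongDual_stdGaussian, variance_dual_stdGaussian, innerSL_apply_norm] at h
  rw [gaussianReal_map_const_mul, mul_zero, mul_one, ← Real.toNNReal_of_nonneg (sq_nonneg _)]
  exact h

lemma lintegral_enorm_inner_rpow_stdGaussian (a : E) {r : ℝ} (hr : 0 ≤ r) :
    ∫⁻ ω, ‖⟪a, ω⟫‖ₑ ^ r ∂stdGaussian E = ‖a‖ₑ ^ r * gaussianAbsMoment r := by
  rw [← lintegral_map (f := fun t : ℝ => ‖t‖ₑ ^ r) (by fun_prop) (by fun_prop),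
    stdGaussian_map_inner, lintegral_map (by fun_prop) (by fun_prop), gaussianAbsMoment,
    ← lintegral_const_mul' _ _ (ENNReal.rpow_ne_top_of_nonneg hr enorm_ne_top)]
  simp_rw [enorm_mul, enorm_norm, ENNReal.mul_rpow_of_nonneg _ _ hr]

lemma lintegral_enorm_rpow_mul_gaussianAbsMoment {Y : Type*} [MeasurableSpace Y] {ν : Measure Y}
    [SFinite ν] {F : Y → E} (hF : Measurable F) {q : ℝ} (hq : 0 ≤ q) :
    (∫⁻ y, ‖F y‖ₑ ^ q ∂ν) * gaussianAbsMoment q =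
      ∫⁻ ω, ∫⁻ y, ‖⟪F y, ω⟫‖ₑ ^ q ∂ν ∂stdGaussian E := by
  rw [← lintegral_mul_const _ (by fun_prop)]
  simp_rw [← lintegral_enorm_inner_rpow_stdGaussian _ hq]
  exact lintegral_lintegral_swap (by fun_prop)

lemma lintegral_rpow_lintegral_enorm_inner_le {X : Type*} [MeasurableSpace X] {μ : Measure X}
    [SFinite μ] {G : X → E} (hG : Measurable G) {p q : ℝ} (hp : 0 < p) (hpq : p ≤ q) :
    ∫⁻ ω, (∫⁻ x, ‖⟪G x, ω⟫‖ₑ ^ p ∂μ) ^ (q / p) ∂stdGaussian E ≤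
      (∫⁻ x, ‖G x‖ₑ ^ p ∂μ) ^ (q / p) * gaussianAbsMoment q := by
  have hq : 0 < q := hp.trans_le hpq
  have hinner (x : X) : (∫⁻ ω, (‖⟪G x, ω⟫‖ₑ ^ p) ^ (q / p) ∂stdGaussian E) ^ (q / p)⁻¹ =
      ‖G x‖ₑ ^ p * gaussianAbsMoment q ^ (p / q) := by
    simp_rw [← ENNReal.rpow_mul, mul_div_cancel₀ _ hp.ne']
    rw [lintegral_enorm_inner_rpow_stdGaussian _ hq.le,
      ENNReal.mul_rpow_of_nonneg _ _ (by positivity), ← ENNReal.rpow_mul, inv_div,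
      mul_div_cancel₀ _ hq.ne']
  have minkowski := ENNReal.lintegral_Lp_lintegral_le (ν := stdGaussian E) (μ := μ)
    (g := fun x ω => ‖⟪G x, ω⟫‖ₑ ^ p) (by fun_prop) ((one_le_div hp).mpr hpq)
  simp only [one_div, hinner] at minkowski
  rw [ENNReal.rpow_inv_le_iff (by positivity)] at minkowski
  refine minkowski.trans_eq ?_
  rw [lintegral_mul_const _ (by fun_prop), ENNReal.mul_rpow_of_nonneg _ _ (by positivity),
    ← ENNReal.rpow_mul, div_mul_div_cancel₀ hq.ne', div_self hp.ne', ENNReal.rpow_one]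

end ProbabilityTheory

lemma EuclideanSpace.enorm_rpow_eq_sum {ι : Type*} [Fintype ι] (a : ι → ℝ) (s : ℝ) :
    ‖(WithLp.toLp 2 a : EuclideanSpace ℝ ι)‖ₑ ^ s = (∑ i, ‖a i‖ₑ ^ (2 : ℝ)) ^ (s / 2) := by
  rw [enorm_eq_nnnorm, EuclideanSpace.nnnorm_eq, NNReal.sqrt_eq_rpow,
    ENNReal.coe_rpow_of_nonneg _ (by norm_num), ← ENNReal.rpow_mul, one_div_mul_eq_div]
  simp [ENNReal.ofNNReal_finsetSum, enorm_eq_nnnorm]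

namespace MeasureTheory.Lp

variable {X ι : Type*} [MeasurableSpace X] {μ : Measure X} {P : ℝ≥0∞}

noncomputable def euclideanFun (f : ι → Lp ℝ P μ) (x : X) : EuclideanSpace ℝ ι :=
  WithLp.toLp 2 fun i => f i x

lemma measurable_euclideanFun [Fintype ι] (f : ι → Lp ℝ P μ) : Measurable (euclideanFun f) := by
  have := fun i => (Lp.stronglyMeasurable (f i)).measurable
  unfold euclideanFun
  fun_prop

lemma coeFn_sum_smul_ae_eq_inner [Fintype ι] (f : ι → Lp ℝ P μ) (ω : EuclideanSpace ℝ ι) :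
    ⇑(∑ i, ω i • f i) =ᵐ[μ] fun x => ⟪euclideanFun f x, ω⟫ := by
  filter_upwards [Lp.coeFn_fun_finsetSum Finset.univ fun i => ω i • f i,
    ae_all_iff.mpr fun i => Lp.coeFn_smul (ω i) (f i)] with x hsum hsmul
  rw [hsum]
  simp only [hsmul, Pi.smul_apply, smul_eq_mul, euclideanFun, PiLp.inner_apply,
    RCLike.inner_apply, conj_trivial]

lemma lintegral_enorm_rpow_sum_smul [Fintype ι] (f : ι → Lp ℝ P μ) (ω : EuclideanSpace ℝ ι)
    (r : ℝ) : ∫⁻ x, ‖(∑ i, ω i • f i) x‖ₑ ^ r ∂μ = ∫⁻ x, ‖⟪euclideanFun f x, ω⟫‖ₑ ^ r ∂μ :=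
  lintegral_congr_ae <| (coeFn_sum_smul_ae_eq_inner f ω).mono fun _ hx => congrArg (‖·‖ₑ ^ r) hx

lemma enorm_euclideanFun_fin_rpow (g : ℕ → Lp ℝ P μ) (n : ℕ) (x : X) (s : ℝ) :
    ‖euclideanFun (fun j : Fin n => g j) x‖ₑ ^ s =
      (∑ j ∈ Finset.range n, ‖g j x‖ₑ ^ (2 : ℝ)) ^ (s / 2) := by
  rw [euclideanFun, EuclideanSpace.enorm_rpow_eq_sum,
    Fin.sum_univ_eq_sum_range (fun j => ‖g j x‖ₑ ^ (2 : ℝ))]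

end MeasureTheory.Lp

theorem lintegral_enorm_euclideanFun_rpow_le {X Y ι : Type*} [MeasurableSpace X]
    [MeasurableSpace Y] {μ : Measure X} {ν : Measure Y} [SFinite μ] [SFinite ν] {P Q : ℝ≥0∞}
    [Fintype ι] (T : Lp ℝ P μ →ₗ[ℝ] Lp ℝ Q ν) {p q : ℝ} (hp : 0 < p) (hpq : p ≤ q) {C : ℝ≥0∞}
    (hT : ∀ f, ∫⁻ y, ‖T f y‖ₑ ^ q ∂ν ≤ C * (∫⁻ x, ‖f x‖ₑ ^ p ∂μ) ^ (q / p))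
    (f : ι → Lp ℝ P μ) :
    ∫⁻ y, ‖Lp.euclideanFun (fun i => T (f i)) y‖ₑ ^ q ∂ν ≤
      C * (∫⁻ x, ‖Lp.euclideanFun f x‖ₑ ^ p ∂μ) ^ (q / p) := by
  have hq : 0 < q := hp.trans_le hpq
  have hTω (ω : EuclideanSpace ℝ ι) :
      ∫⁻ y, ‖⟪Lp.euclideanFun (fun i => T (f i)) y, ω⟫‖ₑ ^ q ∂ν ≤
        C * (∫⁻ x, ‖⟪Lp.euclideanFun f x, ω⟫‖ₑ ^ p ∂μ) ^ (q / p) := by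
    have hlin : T (∑ i, ω i • f i) = ∑ i, ω i • T (f i) := by simp
    simpa only [hlin, Lp.lintegral_enorm_rpow_sum_smul] using hT (∑ i, ω i • f i)
  have hmeas : Measurable fun ω : EuclideanSpace ℝ ι =>
      (∫⁻ x, ‖⟪Lp.euclideanFun f x, ω⟫‖ₑ ^ p ∂μ) ^ (q / p) := by
    have := Lp.measurable_euclideanFun f
    exact (Measurable.lintegral_prod_left (by fun_prop)).pow_const _
  refine (ENNReal.mul_le_mul_iff_left (gaussianAbsMoment_ne_zero q)
    (gaussianAbsMoment_ne_top hq)).mp ?_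
  calc (∫⁻ y, ‖Lp.euclideanFun (fun i => T (f i)) y‖ₑ ^ q ∂ν) * gaussianAbsMoment q
      = ∫⁻ ω, ∫⁻ y, ‖⟪Lp.euclideanFun (fun i => T (f i)) y, ω⟫‖ₑ ^ q ∂ν
          ∂stdGaussian (EuclideanSpace ℝ ι) :=
        lintegral_enorm_rpow_mul_gaussianAbsMoment (Lp.measurable_euclideanFun _) hq.le
    _ ≤ ∫⁻ ω, C * (∫⁻ x, ‖⟪Lp.euclideanFun f x, ω⟫‖ₑ ^ p ∂μ) ^ (q / p)
          ∂stdGaussian (EuclideanSpace ℝ ι) := lintegral_mono hTω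
    _ = C * ∫⁻ ω, (∫⁻ x, ‖⟪Lp.euclideanFun f x, ω⟫‖ₑ ^ p ∂μ) ^ (q / p)
          ∂stdGaussian (EuclideanSpace ℝ ι) := lintegral_const_mul _ hmeas
    _ ≤ C * ((∫⁻ x, ‖Lp.euclideanFun f x‖ₑ ^ p ∂μ) ^ (q / p) * gaussianAbsMoment q) := by
        gcongr
        exact lintegral_rpow_lintegral_enorm_inner_le (Lp.measurable_euclideanFun f) hp hpq
    _ = _ := (mul_assoc _ _ _).symm

/-- Marcinkiewicz–Zygmund: a bounded linear operator `T : L^p(X,m) → L^q(X,m)`,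
`0 < p ≤ q < ∞`, with norm bound `M`, admits an `ℓ²`-valued extension with the same
bound: `‖(Σ_j |T f_j|²)^{1/2}‖_{L^q} ≤ M ‖(Σ_j |f_j|²)^{1/2}‖_{L^p}`. -/
theorem marcinkiewicz_zygmund_l2_extension {X : Type*} [MeasurableSpace X]
    (m : Measure X) [SigmaFinite m] (p q : ℝ) (hp : 0 < p) (hpq : p ≤ q)
    (T : Lp ℝ (ENNReal.ofReal p) m →ₗ[ℝ] Lp ℝ (ENNReal.ofReal q) m) (M : ℝ)
    (hT : ∀ f : Lp ℝ (ENNReal.ofReal p) m,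
      (∫⁻ x, ENNReal.ofReal |T f x| ^ q ∂m) ^ (1/q) ≤
        ENNReal.ofReal M * (∫⁻ x, ENNReal.ofReal |f x| ^ p ∂m) ^ (1/p)) :
    ∀ f : ℕ → Lp ℝ (ENNReal.ofReal p) m,
      (∫⁻ x, (∑' j : ℕ, ENNReal.ofReal |T (f j) x| ^ (2:ℝ)) ^ (q/2) ∂m) ^ (1/q) ≤
        ENNReal.ofReal M *
          (∫⁻ x, (∑' j : ℕ, ENNReal.ofReal |f j x| ^ (2:ℝ)) ^ (p/2) ∂m) ^ (1/p) := by
  intro f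
  have hq : 0 < q := hp.trans_le hpq
  simp only [← Real.enorm_eq_ofReal_abs, ENNReal.rpow_one_div_le_mul_rpow_one_div_iff hq] at hT ⊢
  rw [lintegral_tsum_rpow_eq_iSup
    (fun j => (Lp.stronglyMeasurable _).measurable.enorm.pow_const _) (by positivity)]
  refine iSup_le fun n => ?_
  have hfin := lintegral_enorm_euclideanFun_rpow_le T hp hpq hT fun j : Fin n => f j
  simp only [Lp.enorm_euclideanFun_fin_rpow (fun j => T (f j)),
    Lp.enorm_euclideanFun_fin_rpow f] at hfin
  exact hfin.trans (by gcongr; exact ENNReal.sum_le_tsum _)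
end

section
/- Let 0 < σ < 1, α, β ≥ −1/2, and suppose the exponents p, q satisfy max{(2α+2)/(α+3/2), (2β+2)/(β+3/2)} < p ≤ q < min{(2α+2)/(α+1/2), (2β+2)/(β+1/2)} and 1/q ≥ 1/p − min{σ/(2α+2), σ/(2β+2)}. Let w(θ) = (sin(θ/2))^{(2α+1)(1−q/2)} (cos(θ/2))^{(2β+1)(1−q/2)} and v̄(θ) = (sin(θ/2))^{(2α+1)(1−p/2)·(−1/(p−1))} (cos(θ/2))^{(2β+1)(1−p/2)·(−1/(p−1))} on (0,π). Then there exists a constant C < ∞, depending only on σ, α, β, p and q, such that for every interval I ⊂ (0,π): (∫_I w(θ) dθ)^{1/q} (∫_I v̄(θ) dθ)^{(p−1)/p} ≤ C |I|^{1−σ}. -/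
open MeasureTheory Real Set

open scoped ENNReal

/-!
Both weights have the form `sin(θ/2)^s cos(θ/2)^t` with `s, t > -1`. On `(0, 3π/4]` such a weight
is at most a constant times `θ^s`, so its integral over `(a, b)` is `O((b - a) b^s)`. With
`L = b - a ≤ b ≤ π`, the product `(L b^{s₁})^{1/q} (L b^{s₂})^{(p-1)/p}` is `O(L^{1-σ})` because
both `1/q + (p-1)/p` and the scaling exponent `(s₁+1)/q + (s₂+1)(p-1)/p = 1 + (2α+2)(1/q - 1/p)`
are at least `1 - σ`. The reflection `θ ↦ π - θ` swaps `s` and `t` and handles intervals in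
`[π/4, π)`; the remaining intervals have length at least `π/2`, and there integrability on
`(0, π)` suffices.
-/

lemma rpow_le_max_of_mem_Icc {m M u : ℝ} (hm : 0 < m) (hu : u ∈ Icc m M) (s : ℝ) :
    u ^ s ≤ max (m ^ s) (M ^ s) := by
  rcases le_total 0 s with hs | hs
  · exact le_max_of_le_right (rpow_le_rpow (hm.le.trans hu.1) hu.2 hs)
  · exact le_max_of_le_left (rpow_le_rpow_of_nonpos hm hu.1 hs)

lemma rpow_mul_rpow_le_ofReal {x y : ℝ≥0∞} {c d r₁ r₂ : ℝ} (hx : x ≤ ENNReal.ofReal c)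
    (hy : y ≤ ENNReal.ofReal d) (hc : 0 ≤ c) (hd : 0 ≤ d) (hr₁ : 0 ≤ r₁) (hr₂ : 0 ≤ r₂) :
    x ^ r₁ * y ^ r₂ ≤ ENNReal.ofReal (c ^ r₁ * d ^ r₂) := by
  rw [ENNReal.ofReal_mul (rpow_nonneg hc _), ← ENNReal.ofReal_rpow_of_nonneg hc hr₁,
    ← ENNReal.ofReal_rpow_of_nonneg hd hr₂]
  exact mul_le_mul' (ENNReal.rpow_le_rpow hx hr₁) (ENNReal.rpow_le_rpow hy hr₂)

lemma setLIntegral_Ioo_comp_const_sub (f : ℝ → ℝ≥0∞) (c a b : ℝ) :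
    ∫⁻ x in Ioo a b, f x = ∫⁻ x in Ioo (c - b) (c - a), f (c - x) := by
  rw [← preimage_const_sub_Ioo]
  exact ((volume.measurePreserving_sub_left c).setLIntegral_comp_preimage_emb
    (measurableEmbedding_subLeft c) f _).symm

lemma setLIntegral_Ioo_zero_rpow {s : ℝ} (hs : -1 < s) {b : ℝ} (hb : 0 ≤ b) :
    ∫⁻ θ in Ioo 0 b, ENNReal.ofReal (θ ^ s) = ENNReal.ofReal (b ^ (s + 1) / (s + 1)) := by
  have hint : IntegrableOn (fun θ : ℝ => θ ^ s) (Ioo 0 b) := by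
    rw [← intervalIntegrable_iff_integrableOn_Ioo_of_le hb]
    exact intervalIntegral.intervalIntegrable_rpow' hs
  rw [← ofReal_integral_eq_lintegral_ofReal hint
      (ae_restrict_of_forall_mem measurableSet_Ioo fun θ hθ => rpow_nonneg hθ.1.le s),
    ← integral_Ioc_eq_integral_Ioo, ← intervalIntegral.integral_of_le hb,
    integral_rpow (Or.inl hs), zero_rpow (by linarith), sub_zero]

lemma exists_setLIntegral_Ioo_rpow_le {s : ℝ} (hs : -1 < s) :
    ∃ C, 0 < C ∧ ∀ a b : ℝ, 0 ≤ a → a ≤ b →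
      ∫⁻ θ in Ioo a b, ENNReal.ofReal (θ ^ s) ≤ ENNReal.ofReal (C * ((b - a) * b ^ s)) := by
  have hs1 : 0 < s + 1 := by linarith
  refine ⟨max ((2 : ℝ)⁻¹ ^ s) 1 + 2 / (s + 1), by positivity, fun a b ha hab => ?_⟩
  have hb := ha.trans hab
  have hbs : 0 ≤ b ^ s := rpow_nonneg hb s
  rcases le_or_gt b (2 * a) with hb2a | h2ab
  · have hpt : ∀ θ ∈ Ioo a b, θ ^ s ≤ max ((2 : ℝ)⁻¹ ^ s) 1 * b ^ s := fun θ hθ => by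
      have hb0 : 0 < b := ha.trans_lt (hθ.1.trans hθ.2)
      have := rpow_le_max_of_mem_Icc (by positivity : 0 < 2⁻¹ * b)
        ⟨by linarith [hθ.1], hθ.2.le⟩ s
      rw [max_mul_of_nonneg _ _ hbs, one_mul]
      rwa [mul_rpow (by norm_num) hb0.le] at this
    calc ∫⁻ θ in Ioo a b, ENNReal.ofReal (θ ^ s)
        ≤ ∫⁻ _ in Ioo a b, ENNReal.ofReal (max ((2 : ℝ)⁻¹ ^ s) 1 * b ^ s) :=
          setLIntegral_mono' measurableSet_Ioo fun θ hθ => ENNReal.ofReal_le_ofReal (hpt θ hθ)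
      _ = ENNReal.ofReal (max ((2 : ℝ)⁻¹ ^ s) 1 * ((b - a) * b ^ s)) := by
          rw [setLIntegral_const, volume_Ioo, ← ENNReal.ofReal_mul (by positivity), mul_assoc,
            mul_comm (b ^ s)]
      _ ≤ _ := by gcongr; linarith [div_pos two_pos hs1]
  · have hb0 : 0 < b := by linarith
    calc ∫⁻ θ in Ioo a b, ENNReal.ofReal (θ ^ s)
        ≤ ∫⁻ θ in Ioo 0 b, ENNReal.ofReal (θ ^ s) := lintegral_mono_set (Ioo_subset_Ioo_left ha)
      _ = ENNReal.ofReal (b ^ (s + 1) / (s + 1)) := setLIntegral_Ioo_zero_rpow hs hb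
      _ ≤ ENNReal.ofReal (2 / (s + 1) * ((b - a) * b ^ s)) := by
          rw [rpow_add_one hb0.ne', div_mul_eq_mul_div]
          gcongr ENNReal.ofReal (?_ / _)
          nlinarith
      _ ≤ _ := by gcongr; exact le_add_of_nonneg_left (by positivity)

noncomputable def halfAngleWeight (s t θ : ℝ) : ℝ := sin (θ / 2) ^ s * cos (θ / 2) ^ t

lemma halfAngleWeight_pi_sub (s t θ : ℝ) :
    halfAngleWeight s t (π - θ) = halfAngleWeight t s θ := by
  rw [halfAngleWeight, halfAngleWeight, show (π - θ) / 2 = π / 2 - θ / 2 by ring,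
    sin_pi_div_two_sub, cos_pi_div_two_sub, mul_comm]

lemma setLIntegral_Ioo_halfAngleWeight_swap (s t a b : ℝ) :
    ∫⁻ θ in Ioo a b, ENNReal.ofReal (halfAngleWeight s t θ) =
      ∫⁻ θ in Ioo (π - b) (π - a), ENNReal.ofReal (halfAngleWeight t s θ) := by
  simp only [setLIntegral_Ioo_comp_const_sub _ π a b, halfAngleWeight_pi_sub]

lemma exists_halfAngleWeight_le_rpow (s t : ℝ) :
    ∃ C, 0 < C ∧ ∀ θ ∈ Ioc 0 (3 * π / 4), halfAngleWeight s t θ ≤ C * θ ^ s := by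
  have hc : 0 < cos (3 * π / 8) := cos_pos_of_mem_Ioo ⟨by linarith [pi_pos], by linarith [pi_pos]⟩
  refine ⟨max ((1 / π) ^ s) ((1 / 2) ^ s) * max (cos (3 * π / 8) ^ t) (1 ^ t), by positivity,
    fun θ hθ => ?_⟩
  have hθ2 : 0 ≤ θ / 2 := by linarith [hθ.1]
  have hsin : sin (θ / 2) / θ ∈ Icc (1 / π) (1 / 2) := by
    constructor
    · rw [le_div_iff₀ hθ.1]
      have := mul_le_sin hθ2 (by linarith [hθ.2, pi_pos])
      linarith [show 1 / π * θ = 2 / π * (θ / 2) by ring]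
    · rw [div_le_iff₀ hθ.1]
      linarith [sin_le hθ2]
  have hcos : cos (θ / 2) ∈ Icc (cos (3 * π / 8)) 1 :=
    ⟨cos_le_cos_of_nonneg_of_le_pi hθ2 (by linarith [pi_pos]) (by linarith [hθ.2]), cos_le_one _⟩
  have hsin_eq : sin (θ / 2) ^ s = (sin (θ / 2) / θ) ^ s * θ ^ s := by
    rw [← mul_rpow (hsin.1.trans' (by positivity)) hθ.1.le, div_mul_cancel₀ _ hθ.1.ne']
  calc halfAngleWeight s t θ
      = (sin (θ / 2) / θ) ^ s * θ ^ s * cos (θ / 2) ^ t := by rw [halfAngleWeight, hsin_eq]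
    _ ≤ max ((1 / π) ^ s) ((1 / 2) ^ s) * θ ^ s * max (cos (3 * π / 8) ^ t) (1 ^ t) := by
        refine mul_le_mul (mul_le_mul_of_nonneg_right ?_ (rpow_nonneg hθ.1.le s))
          (rpow_le_max_of_mem_Icc hc hcos t) (rpow_nonneg (hc.le.trans hcos.1) t)
          (mul_nonneg (by positivity) (rpow_nonneg hθ.1.le s))
        exact rpow_le_max_of_mem_Icc (by positivity) hsin s
    _ = _ := by ring

lemma exists_setLIntegral_halfAngleWeight_le {s : ℝ} (t : ℝ) (hs : -1 < s) :
    ∃ C, 0 < C ∧ ∀ a b : ℝ, 0 ≤ a → a ≤ b → b ≤ 3 * π / 4 →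
      ∫⁻ θ in Ioo a b, ENNReal.ofReal (halfAngleWeight s t θ) ≤
        ENNReal.ofReal (C * ((b - a) * b ^ s)) := by
  obtain ⟨C₁, hC₁, hW⟩ := exists_halfAngleWeight_le_rpow s t
  obtain ⟨C₂, hC₂, hI⟩ := exists_setLIntegral_Ioo_rpow_le hs
  refine ⟨C₁ * C₂, by positivity, fun a b ha hab hb => ?_⟩
  calc ∫⁻ θ in Ioo a b, ENNReal.ofReal (halfAngleWeight s t θ)
      ≤ ∫⁻ θ in Ioo a b, ENNReal.ofReal C₁ * ENNReal.ofReal (θ ^ s) :=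
        setLIntegral_mono' measurableSet_Ioo fun θ hθ => by
          rw [← ENNReal.ofReal_mul hC₁.le]
          exact ENNReal.ofReal_le_ofReal (hW θ ⟨ha.trans_lt hθ.1, hθ.2.le.trans hb⟩)
    _ = ENNReal.ofReal C₁ * ∫⁻ θ in Ioo a b, ENNReal.ofReal (θ ^ s) :=
        lintegral_const_mul' _ _ ENNReal.ofReal_ne_top
    _ ≤ ENNReal.ofReal C₁ * ENNReal.ofReal (C₂ * ((b - a) * b ^ s)) := by
        gcongr
        exact hI a b ha hab
    _ = _ := by rw [← ENNReal.ofReal_mul hC₁.le, mul_assoc]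

lemma setLIntegral_Ioo_zero_pi_halfAngleWeight_lt_top {s t : ℝ} (hs : -1 < s) (ht : -1 < t) :
    ∫⁻ θ in Ioo 0 π, ENNReal.ofReal (halfAngleWeight s t θ) < ∞ := by
  obtain ⟨C₁, -, h₁⟩ := exists_setLIntegral_halfAngleWeight_le t hs
  obtain ⟨C₂, -, h₂⟩ := exists_setLIntegral_halfAngleWeight_le s ht
  have hcover : Ioo 0 π ⊆ Ioo 0 (3 * π / 4) ∪ Ioo (π / 4) π := fun θ hθ => by
    rcases lt_or_ge θ (3 * π / 4) with h | h
    · exact Or.inl ⟨hθ.1, h⟩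
    · exact Or.inr ⟨by linarith [pi_pos], hθ.2⟩
  have hright := setLIntegral_Ioo_halfAngleWeight_swap s t (π / 4) π
  rw [sub_self, show π - π / 4 = 3 * π / 4 by ring] at hright
  calc ∫⁻ θ in Ioo 0 π, ENNReal.ofReal (halfAngleWeight s t θ)
      ≤ ∫⁻ θ in Ioo 0 (3 * π / 4) ∪ Ioo (π / 4) π, ENNReal.ofReal (halfAngleWeight s t θ) :=
        lintegral_mono_set hcover
    _ ≤ _ := lintegral_union_le _ _ _
    _ < ∞ := by
        rw [hright]
        refine ENNReal.add_lt_top.2 ⟨(h₁ 0 _ le_rfl ?_ le_rfl).trans_lt ENNReal.ofReal_lt_top,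
          (h₂ 0 _ le_rfl ?_ le_rfl).trans_lt ENNReal.ofReal_lt_top⟩ <;> positivity

lemma mul_rpow_mul_mul_rpow_le {L b r₁ r₂ s₁ s₂ τ : ℝ} (hL : 0 < L) (hLb : L ≤ b) (hb : b ≤ π)
    (hτ : τ ≤ r₁ + r₂) (hτs : τ ≤ (s₁ + 1) * r₁ + (s₂ + 1) * r₂) :
    (L * b ^ s₁) ^ r₁ * (L * b ^ s₂) ^ r₂ ≤
      π ^ ((s₁ + 1) * r₁ + (s₂ + 1) * r₂ - τ) * L ^ τ := by
  have hb0 : 0 < b := hL.trans_le hLb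
  have hLπ : L ≤ π := hLb.trans hb
  set F := s₁ * r₁ + s₂ * r₂
  have hsplit : (L * b ^ s₁) ^ r₁ * (L * b ^ s₂) ^ r₂ = L ^ (r₁ + r₂ - τ) * b ^ F * L ^ τ := by
    rw [mul_rpow hL.le (rpow_nonneg hb0.le _), mul_rpow hL.le (rpow_nonneg hb0.le _),
      ← rpow_mul hb0.le, ← rpow_mul hb0.le, rpow_add hb0, rpow_sub hL, rpow_add hL]
    field_simp
  rw [hsplit, show (s₁ + 1) * r₁ + (s₂ + 1) * r₂ - τ = r₁ + r₂ - τ + F by ring]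
  gcongr
  rcases le_total 0 F with hF | hF
  · rw [rpow_add pi_pos]
    gcongr
  · calc L ^ (r₁ + r₂ - τ) * b ^ F
        ≤ L ^ (r₁ + r₂ - τ) * L ^ F := by gcongr ?_ * ?_; exact rpow_le_rpow_of_nonpos hL hLb hF
      _ = L ^ (r₁ + r₂ - τ + F) := (rpow_add hL _ _).symm
      _ ≤ π ^ (r₁ + r₂ - τ + F) := by gcongr; linarith

section Testing

variable {s₁ t₁ s₂ t₂ r₁ r₂ τ : ℝ}

lemma exists_testing_bound_of_le_three_pi_div_four (hs₁ : -1 < s₁) (hs₂ : -1 < s₂) (t₁ t₂ : ℝ)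
    (hr₁ : 0 ≤ r₁) (hr₂ : 0 ≤ r₂) (hτ : τ ≤ r₁ + r₂)
    (hτs : τ ≤ (s₁ + 1) * r₁ + (s₂ + 1) * r₂) :
    ∃ C, 0 < C ∧ ∀ a b : ℝ, 0 ≤ a → a < b → b ≤ 3 * π / 4 →
      (∫⁻ θ in Ioo a b, ENNReal.ofReal (halfAngleWeight s₁ t₁ θ)) ^ r₁ *
        (∫⁻ θ in Ioo a b, ENNReal.ofReal (halfAngleWeight s₂ t₂ θ)) ^ r₂ ≤
          ENNReal.ofReal (C * (b - a) ^ τ) := by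
  obtain ⟨C₁, hC₁, h₁⟩ := exists_setLIntegral_halfAngleWeight_le t₁ hs₁
  obtain ⟨C₂, hC₂, h₂⟩ := exists_setLIntegral_halfAngleWeight_le t₂ hs₂
  refine ⟨C₁ ^ r₁ * C₂ ^ r₂ * π ^ ((s₁ + 1) * r₁ + (s₂ + 1) * r₂ - τ), by positivity,
    fun a b ha hab hb => ?_⟩
  have hL : 0 < b - a := sub_pos.2 hab
  have hb0 : 0 < b := ha.trans_lt hab
  refine (rpow_mul_rpow_le_ofReal (h₁ a b ha hab.le hb) (h₂ a b ha hab.le hb)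
    (by positivity) (by positivity) hr₁ hr₂).trans (ENNReal.ofReal_le_ofReal ?_)
  rw [mul_rpow hC₁.le (by positivity), mul_rpow hC₂.le (by positivity), mul_mul_mul_comm,
    mul_assoc _ (π ^ _)]
  exact mul_le_mul_of_nonneg_left
    (mul_rpow_mul_mul_rpow_le hL (by linarith) (by linarith [pi_pos]) hτ hτs) (by positivity)

lemma exists_testing_bound_of_pi_div_two_le (hs₁ : -1 < s₁) (ht₁ : -1 < t₁) (hs₂ : -1 < s₂)
    (ht₂ : -1 < t₂) (hr₁ : 0 ≤ r₁) (hr₂ : 0 ≤ r₂) (τ : ℝ) :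
    ∃ C, 0 < C ∧ ∀ a b : ℝ, 0 ≤ a → b ≤ π → π / 2 ≤ b - a →
      (∫⁻ θ in Ioo a b, ENNReal.ofReal (halfAngleWeight s₁ t₁ θ)) ^ r₁ *
        (∫⁻ θ in Ioo a b, ENNReal.ofReal (halfAngleWeight s₂ t₂ θ)) ^ r₂ ≤
          ENNReal.ofReal (C * (b - a) ^ τ) := by
  set M₁ := (∫⁻ θ in Ioo 0 π, ENNReal.ofReal (halfAngleWeight s₁ t₁ θ)).toReal
  set M₂ := (∫⁻ θ in Ioo 0 π, ENNReal.ofReal (halfAngleWeight s₂ t₂ θ)).toReal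
  have hM₁ := setLIntegral_Ioo_zero_pi_halfAngleWeight_lt_top hs₁ ht₁
  have hM₂ := setLIntegral_Ioo_zero_pi_halfAngleWeight_lt_top hs₂ ht₂
  refine ⟨(M₁ ^ r₁ * M₂ ^ r₂ + 1) * max ((π / 2) ^ (-τ)) (π ^ (-τ)), by positivity,
    fun a b ha hb hL => ?_⟩
  have hL0 : 0 < b - a := lt_of_lt_of_le (by positivity) hL
  have hone : 1 ≤ max ((π / 2) ^ (-τ)) (π ^ (-τ)) * (b - a) ^ τ := by
    calc (1 : ℝ) = (b - a) ^ (-τ) * (b - a) ^ τ := by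
          rw [rpow_neg hL0.le, inv_mul_cancel₀ (rpow_pos_of_pos hL0 τ).ne']
      _ ≤ _ := by
        gcongr
        exact rpow_le_max_of_mem_Icc (by positivity) ⟨hL, by linarith⟩ (-τ)
  refine (rpow_mul_rpow_le_ofReal (c := M₁) (d := M₂) ?_ ?_ ENNReal.toReal_nonneg
    ENNReal.toReal_nonneg hr₁ hr₂).trans (ENNReal.ofReal_le_ofReal ?_)
  · rw [ENNReal.ofReal_toReal hM₁.ne]; exact lintegral_mono_set (Ioo_subset_Ioo ha hb)
  · rw [ENNReal.ofReal_toReal hM₂.ne]; exact lintegral_mono_set (Ioo_subset_Ioo ha hb)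
  · calc M₁ ^ r₁ * M₂ ^ r₂ ≤ (M₁ ^ r₁ * M₂ ^ r₂ + 1) * 1 := by linarith
      _ ≤ _ := by rw [mul_assoc]; gcongr

theorem exists_testing_bound_halfAngleWeight (hs₁ : -1 < s₁) (ht₁ : -1 < t₁) (hs₂ : -1 < s₂)
    (ht₂ : -1 < t₂) (hr₁ : 0 < r₁) (hr₂ : 0 < r₂) (hτ : τ ≤ r₁ + r₂)
    (hτs : τ ≤ (s₁ + 1) * r₁ + (s₂ + 1) * r₂) (hτt : τ ≤ (t₁ + 1) * r₁ + (t₂ + 1) * r₂) :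
    ∃ C, 0 < C ∧ ∀ a b : ℝ, 0 ≤ a → a ≤ b → b ≤ π →
      (∫⁻ θ in Ioo a b, ENNReal.ofReal (halfAngleWeight s₁ t₁ θ)) ^ r₁ *
        (∫⁻ θ in Ioo a b, ENNReal.ofReal (halfAngleWeight s₂ t₂ θ)) ^ r₂ ≤
          ENNReal.ofReal (C * (b - a) ^ τ) := by
  obtain ⟨C₁, hC₁, hleft⟩ :=
    exists_testing_bound_of_le_three_pi_div_four hs₁ hs₂ t₁ t₂ hr₁.le hr₂.le hτ hτs
  obtain ⟨C₂, hC₂, hright⟩ :=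
    exists_testing_bound_of_le_three_pi_div_four ht₁ ht₂ s₁ s₂ hr₁.le hr₂.le hτ hτt
  obtain ⟨C₃, hC₃, hlong⟩ :=
    exists_testing_bound_of_pi_div_two_le hs₁ ht₁ hs₂ ht₂ hr₁.le hr₂.le τ
  refine ⟨C₁ + C₂ + C₃, by positivity, fun a b ha hab hb => ?_⟩
  rcases hab.eq_or_lt with rfl | hab
  · simp [ENNReal.zero_rpow_of_pos hr₁]
  have hLτ : 0 ≤ (b - a) ^ τ := rpow_nonneg (by linarith) τ
  rcases le_or_gt b (3 * π / 4) with hb' | hb'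
  · refine (hleft a b ha hab hb').trans (ENNReal.ofReal_le_ofReal ?_)
    gcongr
    linarith
  rcases le_or_gt (π / 4) a with ha' | ha'
  · have h := hright (π - b) (π - a) (by linarith) (by linarith) (by linarith)
    rw [sub_sub_sub_cancel_left] at h
    rw [setLIntegral_Ioo_halfAngleWeight_swap s₁, setLIntegral_Ioo_halfAngleWeight_swap s₂]
    refine h.trans (ENNReal.ofReal_le_ofReal ?_)
    gcongr
    linarith
  · refine (hlong a b ha hb (by linarith)).trans (ENNReal.ofReal_le_ofReal ?_)
    gcongr
    linarith

end Testing

section Exponents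

variable {γ p q σ : ℝ}

lemma one_lt_of_two_mul_add_two_div_lt (hγ : -(1/2) ≤ γ) (hp : (2*γ+2)/(γ+3/2) < p) : 1 < p := by
  have : 1 ≤ (2*γ+2)/(γ+3/2) := by rw [le_div_iff₀ (by linarith)]; linarith
  linarith

lemma neg_one_lt_primal_exponent (hγ : -(1/2) ≤ γ)
    (hq : q < (2*γ+2)/(γ+1/2)) : -1 < (2*γ+1)*(1 - q/2) := by
  rcases hγ.eq_or_lt with rfl | hγ
  · norm_num
  · rw [lt_div_iff₀ (by linarith)] at hq
    nlinarith

lemma neg_one_lt_dual_exponent (hγ : -(1/2) ≤ γ) (hp : (2*γ+2)/(γ+3/2) < p) :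
    -1 < (2*γ+1)*(1 - p/2)*(-1/(p-1)) := by
  have hp1 := one_lt_of_two_mul_add_two_div_lt hγ hp
  rw [div_lt_iff₀ (by linarith)] at hp
  have hid : (2*γ+1)*(1 - p/2)*(-1/(p-1)) + 1 = (p*(2*γ+3) - (4*γ+4))/(2*(p-1)) := by
    field_simp [(by linarith : p - 1 ≠ 0)]
    ring
  have : 0 < (p*(2*γ+3) - (4*γ+4))/(2*(p-1)) := div_pos (by linarith) (by linarith)
  linarith

lemma one_sub_le_inv_add_one_sub_inv (hγ : -(1/2) ≤ γ) (hσ : 0 ≤ σ) (hp : 0 < p)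
    (hpq : 1/p - σ/(2*γ+2) ≤ 1/q) : 1 - σ ≤ 1/q + (p-1)/p := by
  have : σ/(2*γ+2) ≤ σ := div_le_self hσ (by linarith)
  have : (p-1)/p = 1 - 1/p := by field_simp
  linarith

lemma one_sub_le_scaling_exponent (hγ : -(1/2) ≤ γ) (hp : 1 < p) (hq : 0 < q)
    (hpq : 1/p - σ/(2*γ+2) ≤ 1/q) :
    1 - σ ≤ ((2*γ+1)*(1 - q/2) + 1) * (1/q) + ((2*γ+1)*(1 - p/2)*(-1/(p-1)) + 1) * ((p-1)/p) := by
  have hγ2 : 0 < 2*γ+2 := by linarith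
  have hid : ((2*γ+1)*(1 - q/2) + 1) * (1/q) + ((2*γ+1)*(1 - p/2)*(-1/(p-1)) + 1) * ((p-1)/p) =
      1 + (2*γ+2)*(1/q - 1/p) := by
    field_simp [(by linarith : p - 1 ≠ 0)]
    ring
  have : -σ ≤ (2*γ+2)*(1/q - 1/p) :=
    calc -σ = (2*γ+2) * -(σ/(2*γ+2)) := by rw [mul_neg, mul_div_cancel₀ _ hγ2.ne']
      _ ≤ _ := by gcongr; linarith
  linarith

end Exponents

theorem power_weights_testing_condition_general (σ α β p q : ℝ) (hσ0 : 0 < σ)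
    (hα : -(1/2) ≤ α) (hβ : -(1/2) ≤ β)
    (hp : max ((2*α+2)/(α+3/2)) ((2*β+2)/(β+3/2)) < p) (hpq : p ≤ q)
    (hq : q < min ((2*α+2)/(α+1/2)) ((2*β+2)/(β+1/2)))
    (hσpq : 1/q ≥ 1/p - min (σ/(2*α+2)) (σ/(2*β+2))) :
    ∃ C : ℝ, 0 < C ∧ ∀ a b : ℝ, 0 ≤ a → a ≤ b → b ≤ π →
      (∫⁻ θ in Ioo a b, ENNReal.ofReal ((Real.sin (θ/2)) ^ ((2*α+1)*(1 - q/2)) *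
          (Real.cos (θ/2)) ^ ((2*β+1)*(1 - q/2)))) ^ (1/q) *
        (∫⁻ θ in Ioo a b, ENNReal.ofReal ((Real.sin (θ/2)) ^ ((2*α+1)*(1 - p/2)*(-1/(p-1))) *
          (Real.cos (θ/2)) ^ ((2*β+1)*(1 - p/2)*(-1/(p-1))))) ^ ((p-1)/p) ≤
        ENNReal.ofReal (C * (b - a) ^ (1 - σ)) := by
  have hpα : (2*α+2)/(α+3/2) < p := (le_max_left _ _).trans_lt hp
  have hpβ : (2*β+2)/(β+3/2) < p := (le_max_right _ _).trans_lt hp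
  have hqα : q < (2*α+2)/(α+1/2) := hq.trans_le (min_le_left _ _)
  have hqβ : q < (2*β+2)/(β+1/2) := hq.trans_le (min_le_right _ _)
  have hσα : 1/p - σ/(2*α+2) ≤ 1/q := (sub_le_sub_left (min_le_left _ _) _).trans hσpq
  have hσβ : 1/p - σ/(2*β+2) ≤ 1/q := (sub_le_sub_left (min_le_right _ _) _).trans hσpq
  have hp1 : 1 < p := one_lt_of_two_mul_add_two_div_lt hα hpα
  have hq0 : 0 < q := by linarith
  exact exists_testing_bound_halfAngleWeight
    (neg_one_lt_primal_exponent hα hqα) (neg_one_lt_primal_exponent hβ hqβ)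
    (neg_one_lt_dual_exponent hα hpα) (neg_one_lt_dual_exponent hβ hpβ)
    (by positivity) (div_pos (by linarith) (by linarith))
    (one_sub_le_inv_add_one_sub_inv hα hσ0.le (by linarith) hσα)
    (one_sub_le_scaling_exponent hα hp1 hq0 hσα) (one_sub_le_scaling_exponent hβ hp1 hq0 hσβ)

/-- The two-weight testing condition for the power weights
`w(θ) = (sin(θ/2))^{(2α+1)(1-q/2)}(cos(θ/2))^{(2β+1)(1-q/2)}` and
`v̄(θ) = (sin(θ/2))^{(2α+1)(1-p/2)(-1/(p-1))}(cos(θ/2))^{(2β+1)(1-p/2)(-1/(p-1))}`: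
`w(I)^{1/q} v̄(I)^{(p-1)/p} ≤ C |I|^{1-σ}` for every interval `I ⊂ (0,π)`. -/
theorem power_weights_testing_condition (σ α β p q : ℝ) (hσ0 : 0 < σ) (hσ1 : σ < 1)
    (hα : -(1/2) ≤ α) (hβ : -(1/2) ≤ β)
    (hp : max ((2*α+2)/(α+3/2)) ((2*β+2)/(β+3/2)) < p) (hpq : p ≤ q)
    (hq : q < min ((2*α+2)/(α+1/2)) ((2*β+2)/(β+1/2)))
    (hσpq : 1/q ≥ 1/p - min (σ/(2*α+2)) (σ/(2*β+2))) :
    ∃ C : ℝ, 0 < C ∧ ∀ a b : ℝ, 0 ≤ a → a ≤ b → b ≤ π →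
      (∫⁻ θ in Ioo a b, ENNReal.ofReal ((Real.sin (θ/2)) ^ ((2*α+1)*(1 - q/2)) *
          (Real.cos (θ/2)) ^ ((2*β+1)*(1 - q/2)))) ^ (1/q) *
        (∫⁻ θ in Ioo a b, ENNReal.ofReal ((Real.sin (θ/2)) ^ ((2*α+1)*(1 - p/2)*(-1/(p-1))) *
          (Real.cos (θ/2)) ^ ((2*β+1)*(1 - p/2)*(-1/(p-1))))) ^ ((p-1)/p) ≤
        ENNReal.ofReal (C * (b - a) ^ (1 - σ)) :=
  power_weights_testing_condition_general σ α β p q hσ0 hα hβ hp hpq hq hσpq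
end

section
/- Let 0 < σ < 1 and let α, β ≥ −1/2. Then there exists a constant C, depending only on σ (and not on α or β), such that for all 0 < s ≤ 2: ∫_0^1 sinh(t/2) · (cosh(t/2) − 1 + s)^{−(α+β+2)} · t^{σ−1} dt ≤ C · (Γ(σ/2 + 1/2) Γ(α+β+3/2−σ/2) / Γ(α+β+2)) · s^{−(α+β+3/2−σ/2)}. -/
/-!
On `(0, 1)` we have `sinh (t/2) ≤ t` and `cosh (t/2) - 1 ≥ t²/8`, so with `a = α + β + 2 ≥ 1` the
integrand is at most `t^σ (t²/8 + s)^(-a)`. The integral of this majorant over all of `(0, ∞)` is a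
Beta integral, `8^p Γ(p) Γ(a - p) / (2 Γ(a)) · s^(p - a)` with `p = (σ + 1)/2 < 1 ≤ a`: write
`x^(-a) = Γ(a)⁻¹ ∫₀^∞ u^(a-1) e^(-xu) du`, exchange the integrals, and evaluate the Gaussian
integral in `t` and then the Gamma integral in `u`.
-/

open Real Set MeasureTheory

lemma one_add_sq_div_two_le_cosh (x : ℝ) : 1 + x ^ 2 / 2 ≤ cosh x := by
  rw [← cosh_abs, ← sq_abs]
  have hsinh : |x| / 2 ≤ sinh (|x| / 2) := self_le_sinh_iff.mpr (by positivity)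
  have hcosh : cosh |x| = 2 * sinh (|x| / 2) ^ 2 + 1 := by
    have h := cosh_two_mul (|x| / 2)
    rw [cosh_sq, mul_div_cancel₀ _ two_ne_zero] at h
    linarith
  nlinarith [abs_nonneg x]

lemma sinh_half_le_self {t : ℝ} (h0 : 0 ≤ t) (h1 : t ≤ 1) : sinh (t / 2) ≤ t := by
  have hexp : exp (t / 2) * exp (-(t / 2)) = 1 := by rw [← exp_add]; simp
  have hlin : -(t / 2) + 1 ≤ exp (-(t / 2)) := add_one_le_exp _
  rw [sinh_eq]
  nlinarith [sq_nonneg (exp (-(t / 2)) - 1), exp_pos (-(t / 2))]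

lemma sinh_half_mul_rpow_le {σ a s t : ℝ} (ha : 0 ≤ a) (hs : 0 < s) (ht0 : 0 < t) (ht1 : t ≤ 1) :
    sinh (t / 2) * (cosh (t / 2) - 1 + s) ^ (-a) * t ^ (σ - 1) ≤
      t ^ σ * (1 / 8 * t ^ 2 + s) ^ (-a) := by
  have hcosh : 1 / 8 * t ^ 2 + s ≤ cosh (t / 2) - 1 + s := by
    linarith [one_add_sq_div_two_le_cosh (t / 2)]
  have hpos : 0 < 1 / 8 * t ^ 2 + s := by positivity
  calc sinh (t / 2) * (cosh (t / 2) - 1 + s) ^ (-a) * t ^ (σ - 1)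
      ≤ t * (1 / 8 * t ^ 2 + s) ^ (-a) * t ^ (σ - 1) := by
        refine mul_le_mul_of_nonneg_right (mul_le_mul (sinh_half_le_self ht0.le ht1) ?_
          (rpow_nonneg (hpos.le.trans hcosh) _) ht0.le) (by positivity)
        exact rpow_le_rpow_of_nonpos hpos hcosh (neg_nonpos.mpr ha)
    _ = t ^ σ * (1 / 8 * t ^ 2 + s) ^ (-a) := by
        rw [rpow_sub_one ht0.ne']
        field_simp

lemma lintegral_rpow_mul_exp_neg_mul_rpow {p q b : ℝ} (hp : 0 < p) (hq : -1 < q) (hb : 0 < b) :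
    ∫⁻ x in Ioi (0 : ℝ), ENNReal.ofReal (x ^ q * exp (-b * x ^ p)) =
      ENNReal.ofReal (b ^ (-(q + 1) / p) * (1 / p) * Gamma ((q + 1) / p)) := by
  rw [← integral_rpow_mul_exp_neg_mul_rpow hp hq hb,
    ofReal_integral_eq_lintegral_ofReal (integrableOn_rpow_mul_exp_neg_mul_rpow hq hp hb)]
  filter_upwards [ae_restrict_mem measurableSet_Ioi] with x (hx : 0 < x)
  positivity

lemma ofReal_Gamma_mul_rpow_neg {a x : ℝ} (ha : 0 < a) (hx : 0 < x) :
    ENNReal.ofReal (Gamma a * x ^ (-a)) =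
      ∫⁻ u in Ioi (0 : ℝ), ENNReal.ofReal (u ^ (a - 1) * exp (-x * u)) := by
  simpa [rpow_one, mul_comm] using
    (lintegral_rpow_mul_exp_neg_mul_rpow one_pos (by linarith : -1 < a - 1) hx).symm

lemma lintegral_rpow_mul_exp_neg_mul_sq_add {σ b s u : ℝ} (hσ : -1 < σ) (hb : 0 < b) (hu : 0 < u) :
    ∫⁻ t in Ioi (0 : ℝ), ENNReal.ofReal (t ^ σ * exp (-(b * t ^ 2 + s) * u)) =
      ENNReal.ofReal (b ^ (-((σ + 1) / 2)) / 2 * Gamma ((σ + 1) / 2)) *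
        ENNReal.ofReal (u ^ (-((σ + 1) / 2)) * exp (-s * u)) := by
  have hsplit : ∀ t, ENNReal.ofReal (t ^ σ * exp (-(b * t ^ 2 + s) * u)) =
      ENNReal.ofReal (exp (-s * u)) * ENNReal.ofReal (t ^ σ * exp (-(b * u) * t ^ (2 : ℝ))) := by
    intro t
    rw [← ENNReal.ofReal_mul (exp_pos _).le, rpow_two, mul_left_comm, ← exp_add]
    ring_nf
  simp_rw [hsplit]
  rw [lintegral_const_mul' _ _ ENNReal.ofReal_ne_top,
    lintegral_rpow_mul_exp_neg_mul_rpow two_pos hσ (mul_pos hb hu),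
    ← ENNReal.ofReal_mul (exp_pos _).le,
    ← ENNReal.ofReal_mul (by have := Gamma_pos_of_pos (by linarith : 0 < (σ + 1) / 2); positivity),
    mul_rpow hb.le hu.le, neg_div]
  ring_nf

lemma lintegral_rpow_mul_sq_add_rpow_neg {σ a b s : ℝ} (hσ : -1 < σ) (ha : (σ + 1) / 2 < a)
    (hb : 0 < b) (hs : 0 < s) :
    ∫⁻ t in Ioi (0 : ℝ), ENNReal.ofReal (t ^ σ * (b * t ^ 2 + s) ^ (-a)) =
      ENNReal.ofReal (b ^ (-((σ + 1) / 2)) / 2 *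
        (Gamma ((σ + 1) / 2) * Gamma (a - (σ + 1) / 2) / Gamma a) * s ^ (-(a - (σ + 1) / 2))) := by
  set p := (σ + 1) / 2 with hp_def
  have ha0 : 0 < a := by linarith
  have hΓa : 0 < Gamma a := Gamma_pos_of_pos ha0
  have hΓp : 0 < Gamma p := Gamma_pos_of_pos (by linarith)
  set F : ℝ → ℝ → ENNReal :=
    fun t u => ENNReal.ofReal (u ^ (a - 1) * (t ^ σ * exp (-(b * t ^ 2 + s) * u))) with hF_def
  have hF : Measurable (Function.uncurry F) := by
    apply Measurable.ennreal_ofReal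
    fun_prop
  refine (ENNReal.mul_right_inj (by simpa using hΓa) ENNReal.ofReal_ne_top).mp ?_
  calc ENNReal.ofReal (Gamma a) * ∫⁻ t in Ioi 0, ENNReal.ofReal (t ^ σ * (b * t ^ 2 + s) ^ (-a))
      = ∫⁻ t in Ioi 0, ∫⁻ u in Ioi 0, F t u := by
        rw [← lintegral_const_mul' _ _ ENNReal.ofReal_ne_top]
        refine setLIntegral_congr_fun measurableSet_Ioi fun t (ht : 0 < t) => ?_
        rw [← ENNReal.ofReal_mul hΓa.le, mul_left_comm, ENNReal.ofReal_mul (by positivity),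
          ofReal_Gamma_mul_rpow_neg ha0 (by positivity),
          ← lintegral_const_mul' _ _ ENNReal.ofReal_ne_top]
        refine lintegral_congr fun u => ?_
        rw [← ENNReal.ofReal_mul (by positivity), hF_def]
        ring_nf
    _ = ∫⁻ u in Ioi 0, ∫⁻ t in Ioi 0, F t u := lintegral_lintegral_swap hF.aemeasurable
    _ = ∫⁻ u in Ioi 0, ENNReal.ofReal (b ^ (-p) / 2 * Gamma p) *
          ENNReal.ofReal (u ^ (a - p - 1) * exp (-s * u)) := by
        refine setLIntegral_congr_fun measurableSet_Ioi fun u (hu : 0 < u) => ?_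
        simp_rw [F, ENNReal.ofReal_mul (rpow_nonneg hu.le (a - 1))]
        rw [lintegral_const_mul' _ _ ENNReal.ofReal_ne_top,
          lintegral_rpow_mul_exp_neg_mul_sq_add hσ hb hu, mul_left_comm,
          ← ENNReal.ofReal_mul (rpow_nonneg hu.le _), ← mul_assoc, ← rpow_add hu, hp_def]
        ring_nf
    _ = ENNReal.ofReal (b ^ (-p) / 2 * Gamma p) *
          ENNReal.ofReal (Gamma (a - p) * s ^ (-(a - p))) := by
        rw [lintegral_const_mul' _ _ ENNReal.ofReal_ne_top,
          ofReal_Gamma_mul_rpow_neg (by linarith) hs]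
    _ = _ := by
        rw [← ENNReal.ofReal_mul (by positivity), ← ENNReal.ofReal_mul hΓa.le]
        congr 1
        field_simp

/-- For `0 < σ < 1` there is a constant `C > 0`, depending only on `σ`, such that for all
`α, β ≥ -1/2` and all `0 < s ≤ 2`,
`∫_0^1 sinh(t/2) (cosh(t/2) - 1 + s)^{-(α+β+2)} t^{σ-1} dt
  ≤ C (Γ(σ/2+1/2) Γ(α+β+3/2-σ/2)/Γ(α+β+2)) s^{-(α+β+3/2-σ/2)}`. -/
theorem lintegral_Ioo_zero_one_sinh_le (σ : ℝ) (hσ0 : 0 < σ) (hσ1 : σ < 1) :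
    ∃ C : ℝ, 0 < C ∧ ∀ α β s : ℝ, -(1/2) ≤ α → -(1/2) ≤ β → 0 < s → s ≤ 2 →
      (∫⁻ t in Ioo (0:ℝ) 1, ENNReal.ofReal
          (Real.sinh (t/2) * (Real.cosh (t/2) - 1 + s) ^ (-(α + β + 2)) * t ^ (σ - 1))) ≤
        ENNReal.ofReal (C * (Real.Gamma (σ/2 + 1/2) * Real.Gamma (α + β + 3/2 - σ/2) /
          Real.Gamma (α + β + 2)) * s ^ (-(α + β + 3/2 - σ/2))) := by
  refine ⟨(1 / 8 : ℝ) ^ (-((σ + 1) / 2)) / 2, by positivity, fun α β s hα hβ hs _ => ?_⟩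
  rw [show σ / 2 + 1 / 2 = (σ + 1) / 2 by ring,
    show α + β + 3 / 2 - σ / 2 = α + β + 2 - (σ + 1) / 2 by ring,
    ← lintegral_rpow_mul_sq_add_rpow_neg (by linarith) (by linarith) (by norm_num) hs]
  calc _ ≤ ∫⁻ t in Ioo (0 : ℝ) 1, ENNReal.ofReal (t ^ σ * (1 / 8 * t ^ 2 + s) ^ (-(α + β + 2))) :=
        setLIntegral_mono' measurableSet_Ioo fun t ht =>
          ENNReal.ofReal_le_ofReal (sinh_half_mul_rpow_le (by linarith) hs ht.1 ht.2.le)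
    _ ≤ _ := lintegral_mono_set Ioo_subset_Ioi_self
end

section
/- Let 0 < σ < 1 and let θ, φ ∈ (0,π) with θ ≠ φ. Then log( (1 − sin(θ/2) sin(φ/2)) / (1 − sin(θ/2) sin(φ/2) − cos(θ/2) cos(φ/2)) ) ≤ 2^{(1+σ)/2} / ( (1−σ) · |sin((θ−φ)/4)|^{1−σ} ). -/
/-!
The denominator is `1 - cos (θ/2 - φ/2) = 2 sin² ((θ - φ)/4)`, and the numerator lies in `(0, 1]`,
so the left side is at most `log (1 / (2 sin² ((θ - φ)/4)))`. The bound then follows from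
`log x ≤ x ^ ε / ε` with `ε = (1 - σ)/2`.
-/

open Real Set

lemma one_sub_sin_mul_sin_sub_cos_mul_cos (x y : ℝ) :
    1 - sin x * sin y - cos x * cos y = 2 * sin ((x - y) / 2) ^ 2 := by
  have hcos : cos (x - y) = cos ((x - y) / 2) ^ 2 - sin ((x - y) / 2) ^ 2 := by
    rw [← cos_two_mul']; ring_nf
  linarith [cos_sub x y, sin_sq_add_cos_sq ((x - y) / 2)]

lemma log_one_div_two_mul_sq_le {σ t : ℝ} (hσ : σ < 1) (ht : t ≠ 0) :
    log (1 / (2 * t ^ 2)) ≤ (2 : ℝ) ^ ((1 + σ) / 2) / ((1 - σ) * |t| ^ (1 - σ)) := by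
  have hε : 0 < (1 - σ) / 2 := by linarith
  have ht' : 0 < |t| := abs_pos.mpr ht
  have hpow : (1 / (2 * t ^ 2)) ^ ((1 - σ) / 2) = (2 : ℝ) ^ (-((1 - σ) / 2)) / |t| ^ (1 - σ) := by
    rw [← sq_abs, one_div, inv_rpow (by positivity), mul_rpow (by norm_num) (by positivity),
      ← rpow_natCast, ← rpow_mul ht'.le, rpow_neg zero_le_two]
    push_cast
    rw [show (2 : ℝ) * ((1 - σ) / 2) = 1 - σ by ring]
    ring
  have htwo : (2 : ℝ) ^ (-((1 - σ) / 2)) * 2 = 2 ^ ((1 + σ) / 2) := by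
    rw [← rpow_add_one two_ne_zero]
    ring_nf
  calc log (1 / (2 * t ^ 2))
      ≤ (1 / (2 * t ^ 2)) ^ ((1 - σ) / 2) / ((1 - σ) / 2) := log_le_rpow_div (by positivity) hε
    _ = (2 : ℝ) ^ ((1 + σ) / 2) / ((1 - σ) * |t| ^ (1 - σ)) := by
      rw [hpow, ← htwo]
      field_simp

lemma sin_quarter_sub_ne_zero {θ φ : ℝ} (hθ : θ ∈ Ioo 0 π) (hφ : φ ∈ Ioo 0 π) (hne : θ ≠ φ) :
    sin ((θ - φ) / 4) ≠ 0 := by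
  obtain ⟨hθ0, hθπ⟩ := hθ
  obtain ⟨hφ0, hφπ⟩ := hφ
  rw [Ne, sin_eq_zero_iff_of_lt_of_lt (by linarith) (by linarith)]
  intro h
  exact hne (by linarith)

lemma one_sub_sin_half_mul_sin_half_mem_Ioc {θ φ : ℝ} (hθ : θ ∈ Ioo 0 π) (hφ : φ ∈ Ioo 0 π) :
    1 - sin (θ / 2) * sin (φ / 2) ∈ Ioc 0 1 := by
  obtain ⟨hθ0, hθπ⟩ := hθ
  obtain ⟨hφ0, hφπ⟩ := hφ
  have hsinθ : 0 < sin (θ / 2) := sin_pos_of_pos_of_lt_pi (by linarith) (by linarith)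
  have hsinφ : 0 < sin (φ / 2) := sin_pos_of_pos_of_lt_pi (by linarith) (by linarith)
  have hcosθ : 0 < cos (θ / 2) := cos_pos_of_mem_Ioo ⟨by linarith, by linarith⟩
  have hcosφ : 0 < cos (φ / 2) := cos_pos_of_mem_Ioo ⟨by linarith, by linarith⟩
  have hsq := one_sub_sin_mul_sin_sub_cos_mul_cos (θ / 2) (φ / 2)
  constructor
  · nlinarith [mul_pos hcosθ hcosφ, sq_nonneg (sin ((θ / 2 - φ / 2) / 2))]
  · nlinarith [mul_pos hsinθ hsinφ]

theorem log_bound_by_sin_quarter_general (σ θ φ : ℝ) (hσ1 : σ < 1)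
    (hθ : θ ∈ Ioo (0:ℝ) π) (hφ : φ ∈ Ioo (0:ℝ) π) (hne : θ ≠ φ) :
    Real.log ((1 - Real.sin (θ/2) * Real.sin (φ/2)) /
        (1 - Real.sin (θ/2) * Real.sin (φ/2) - Real.cos (θ/2) * Real.cos (φ/2))) ≤
      (2:ℝ) ^ ((1 + σ)/2) / ((1 - σ) * |Real.sin ((θ - φ)/4)| ^ (1 - σ)) := by
  have hs := sin_quarter_sub_ne_zero hθ hφ hne
  have hD : 1 - sin (θ / 2) * sin (φ / 2) - cos (θ / 2) * cos (φ / 2)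
      = 2 * sin ((θ - φ) / 4) ^ 2 := by
    rw [one_sub_sin_mul_sin_sub_cos_mul_cos]; ring_nf
  have hD0 : 0 < 2 * sin ((θ - φ) / 4) ^ 2 := by positivity
  obtain ⟨hN0, hN1⟩ := one_sub_sin_half_mul_sin_half_mem_Ioc hθ hφ
  rw [hD]
  calc log ((1 - sin (θ / 2) * sin (φ / 2)) / (2 * sin ((θ - φ) / 4) ^ 2))
      ≤ log (1 / (2 * sin ((θ - φ) / 4) ^ 2)) := by gcongr
    _ ≤ _ := log_one_div_two_mul_sq_le hσ1 hs

/-- For `0 < σ < 1` and `θ ≠ φ` in `(0,π)`,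
`log((1 - sin(θ/2)sin(φ/2))/(1 - sin(θ/2)sin(φ/2) - cos(θ/2)cos(φ/2)))
  ≤ 2^{(1+σ)/2}/((1-σ) |sin((θ-φ)/4)|^{1-σ})`. -/
theorem log_bound_by_sin_quarter (σ θ φ : ℝ) (hσ0 : 0 < σ) (hσ1 : σ < 1)
    (hθ : θ ∈ Ioo (0:ℝ) π) (hφ : φ ∈ Ioo (0:ℝ) π) (hne : θ ≠ φ) :
    Real.log ((1 - Real.sin (θ/2) * Real.sin (φ/2)) /
        (1 - Real.sin (θ/2) * Real.sin (φ/2) - Real.cos (θ/2) * Real.cos (φ/2))) ≤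
      (2:ℝ) ^ ((1 + σ)/2) / ((1 - σ) * |Real.sin ((θ - φ)/4)| ^ (1 - σ)) :=
  log_bound_by_sin_quarter_general σ θ φ hσ1 hθ hφ hne
end
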